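/- arXiv:1910.01615 — 2 statements merged into one kernel-verified Lean document; each statement's English description precedes it below -/
import Mathlib

section
/- If u_{ia} > 0 for all i and a, and z maximizes min_i Ū_i(z) over feasible allocations, then all normalized utilities are equal at z: Ū_i(z) = Ū_j(z) for all agents i, j. -/
def Feasible {n q : ℕ} (z : Fin n → Fin q → ℝ) : Prop :=
  (∀ i a, 0 ≤ z i a ∧ z i a ≤ 1) ∧ (∀ a, ∑ i, z i a = 1)

def util {n q : ℕ} (u : Fin n → Fin q → ℝ) (z : Fin n → Fin q → ℝ) (i : Fin n) : ℝ :=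
  ∑ a, u i a * z i a

noncomputable def nutil {n q : ℕ} (u : Fin n → Fin q → ℝ) (z : Fin n → Fin q → ℝ)
    (i : Fin n) : ℝ := util u z i / ∑ a, u i a

/-! If some agent `k` is strictly above the minimum normalized utility, move to
`(1 - t) • z + t • w`, where `w` hands `k`'s bundle out equally to the other agents. For small
`t > 0`, `k` stays above the old minimum while every other agent strictly gains, because `k`
holds some good and all utilities are positive; so the minimum rises, contradicting optimality. -/

open Filter Topology Finset

lemma exists_pos_le_one_forall_lt_combo {ι : Type*} [Finite ι] {a b : ι → ℝ} {m : ℝ}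
    (h : ∀ i, m < a i ∨ m ≤ a i ∧ a i < b i) :
    ∃ t : ℝ, 0 < t ∧ t ≤ 1 ∧ ∀ i, m < (1 - t) * a i + t * b i := by
  have hev : ∀ i, ∀ᶠ t in 𝓝[>] (0 : ℝ), m < (1 - t) * a i + t * b i := by
    intro i
    rcases h i with hi | ⟨hi, hab⟩
    · have hcont : Tendsto (fun t : ℝ => (1 - t) * a i + t * b i) (𝓝 0) (𝓝 (a i)) :=
        (by fun_prop : Continuous fun t : ℝ => (1 - t) * a i + t * b i).tendsto' 0 _ (by simp)
      exact nhdsWithin_le_nhds (hcont.eventually (lt_mem_nhds hi))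
    · filter_upwards [self_mem_nhdsWithin] with t (ht : 0 < t)
      nlinarith
  obtain ⟨t, hlt, ht⟩ := ((eventually_all.2 hev).and (Ioc_mem_nhdsGT one_pos)).exists
  exact ⟨t, ht.1, ht.2, hlt⟩

section Allocation

variable {n q : ℕ}

lemma Feasible.nonneg {z : Fin n → Fin q → ℝ} (hz : Feasible z) : 0 ≤ z :=
  fun i a => (hz.1 i a).1

lemma Feasible.of_nonneg {z : Fin n → Fin q → ℝ} (hz : 0 ≤ z) (hsum : ∀ a, ∑ i, z i a = 1) :
    Feasible z := by
  refine ⟨fun i a => ⟨hz i a, ?_⟩, hsum⟩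
  rw [← hsum a]
  exact single_le_sum (fun j _ => hz j a) (mem_univ i)

lemma convex_setOf_feasible : Convex ℝ {z : Fin n → Fin q → ℝ | Feasible z} := by
  intro z hz w hw s t hs ht hst
  refine Feasible.of_nonneg ?_ fun a => ?_
  · exact add_nonneg (smul_nonneg hs hz.nonneg) (smul_nonneg ht hw.nonneg)
  · simp only [Pi.add_apply, Pi.smul_apply, smul_eq_mul, sum_add_distrib, ← mul_sum,
      hz.2 a, hw.2 a, mul_one, hst]

lemma util_add_smul (u z w : Fin n → Fin q → ℝ) (s t : ℝ) (i : Fin n) :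
    util u (s • z + t • w) i = s * util u z i + t * util u w i := by
  simp only [util, Pi.add_apply, Pi.smul_apply, smul_eq_mul, mul_sum, ← sum_add_distrib]
  exact sum_congr rfl fun a _ => by ring

lemma nutil_add_smul (u z w : Fin n → Fin q → ℝ) (s t : ℝ) (i : Fin n) :
    nutil u (s • z + t • w) i = s * nutil u z i + t * nutil u w i := by
  simp only [nutil, util_add_smul, add_div, mul_div_assoc]

lemma nutil_nonneg {u z : Fin n → Fin q → ℝ} (hu : 0 ≤ u) (hz : 0 ≤ z) (i : Fin n) :
    0 ≤ nutil u z i :=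
  div_nonneg (sum_nonneg fun a _ => mul_nonneg (hu i a) (hz i a)) (sum_nonneg fun a _ => hu i a)

lemma exists_pos_of_nutil_ne_zero {u z : Fin n → Fin q → ℝ} (hz : 0 ≤ z) {k : Fin n}
    (hk : nutil u z k ≠ 0) : ∃ a, 0 < z k a := by
  by_contra! h
  exact hk (by simp [nutil, util, fun a => le_antisymm (h a) (hz k a)])

noncomputable def redistribute (k : Fin n) (z : Fin n → Fin q → ℝ) : Fin n → Fin q → ℝ :=
  fun i a => if i = k then 0 else z i a + z k a / (n - 1)

lemma feasible_redistribute {z : Fin n → Fin q → ℝ} (hn : 1 < n) (hz : Feasible z) (k : Fin n) :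
    Feasible (redistribute k z) := by
  have hn' : (0 : ℝ) < n - 1 := by rw [sub_pos]; exact_mod_cast hn
  refine Feasible.of_nonneg (fun i a => ?_) fun a => ?_
  · unfold redistribute
    split_ifs
    · exact le_rfl
    · exact add_nonneg (hz.nonneg i a) (div_nonneg (hz.nonneg k a) hn'.le)
  · have hcard : ((univ.erase k).card : ℝ) = n - 1 := by
      rw [card_erase_of_mem (mem_univ k), card_univ, Fintype.card_fin, Nat.cast_pred (by omega)]
    rw [← hz.2 a, ← add_sum_erase _ _ (mem_univ k), ← add_sum_erase _ _ (mem_univ k)]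
    simp only [redistribute, if_pos]
    rw [sum_congr rfl fun i hi => if_neg (ne_of_mem_erase hi), sum_add_distrib, sum_const,
      nsmul_eq_mul, hcard, mul_div_cancel₀ _ hn'.ne']
    ring

lemma nutil_lt_nutil_redistribute {u z : Fin n → Fin q → ℝ} (hu : ∀ i a, 0 < u i a)
    (hn : 1 < n) (hz : 0 ≤ z) {k : Fin n} {a : Fin q} (ha : 0 < z k a) {i : Fin n} (hi : i ≠ k) :
    nutil u z i < nutil u (redistribute k z) i := by
  have hn' : (0 : ℝ) < n - 1 := by rw [sub_pos]; exact_mod_cast hn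
  refine div_lt_div_of_pos_right ?_ (sum_pos (fun b _ => hu i b) ⟨a, mem_univ a⟩)
  refine sum_lt_sum (fun b _ => ?_) ⟨a, mem_univ a, ?_⟩ <;>
    simp only [redistribute, if_neg hi]
  · exact mul_le_mul_of_nonneg_left (le_add_of_nonneg_right (div_nonneg (hz k b) hn'.le))
      (hu i b).le
  · exact mul_lt_mul_of_pos_left (lt_add_of_pos_right _ (div_pos ha hn')) (hu i a)

end Allocation

theorem egalitarian_equal_normalized_utilities {n q : ℕ} [NeZero n]
    (u : Fin n → Fin q → ℝ) (hu : ∀ i a, 0 < u i a)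
    (z : Fin n → Fin q → ℝ) (hz : Feasible z)
    (hopt : ∀ z', Feasible z' →
        Finset.univ.inf' Finset.univ_nonempty (nutil u z') ≤
          Finset.univ.inf' Finset.univ_nonempty (nutil u z)) :
    ∀ i j, nutil u z i = nutil u z j := by
  set m := univ.inf' univ_nonempty (nutil u z)
  suffices h : ∀ k, nutil u z k = m from fun i j => by rw [h i, h j]
  intro k
  refine (inf'_le _ (mem_univ k)).antisymm' (not_lt.1 fun hk => ?_)
  have hm : ∀ i, m ≤ nutil u z i := fun i => inf'_le _ (mem_univ i)
  obtain ⟨j, -, hj⟩ := exists_mem_eq_inf' univ_nonempty (nutil u z)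
  have hn : 1 < n :=
    Fin.nontrivial_iff_two_le.1 (nontrivial_of_ne j k (by rintro rfl; exact hk.ne hj))
  obtain ⟨a, ha⟩ := exists_pos_of_nutil_ne_zero hz.nonneg
    ((nutil_nonneg (fun i a => (hu i a).le) hz.nonneg j).trans_lt (hj ▸ hk)).ne'
  obtain ⟨t, ht0, ht1, hlt⟩ := exists_pos_le_one_forall_lt_combo
    (a := nutil u z) (b := nutil u (redistribute k z)) (m := m) fun i => by
      by_cases hik : i = k
      · exact .inl (hik ▸ hk)
      · exact .inr ⟨hm i, nutil_lt_nutil_redistribute hu hn hz.nonneg ha hik⟩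
  have hfeas : Feasible ((1 - t) • z + t • redistribute k z) :=
    convex_setOf_feasible hz (feasible_redistribute hn hz k) (by linarith) ht0.le (by ring)
  refine (hopt _ hfeas).not_gt ((lt_inf'_iff _).2 fun i _ => ?_)
  rw [nutil_add_smul]
  exact hlt i
end

section
/- Let z* be an allocation and i, h agents with weights w_i, w_h > 0 such that Ū_i(z*)/w_i = Ū_h(z*)/w_h (the weighted egalitarian condition), and suppose μ_i(z*), μ_h(z*) > 0. Then μ_i(z*)/w_i > μ_h(z*)/w_h if and only if ū_i(z*) < ū_h(z*). -/
/-- Normalized utility of agent `i` in the rating model. -/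
noncomputable def nutilR {n q : ℕ} (K : ℝ) (m : Fin q → ℝ) (r : Fin n → Fin q → ℝ)
    (z : Fin n → Fin q → ℝ) (i : Fin n) : ℝ :=
  (∑ a, K ^ (r i a - 3) * m a * z i a) / (∑ a, K ^ (r i a - 3) * m a)

/-- Market value of agent `i`'s bundle. -/
def mvalue {n q : ℕ} (m : Fin q → ℝ) (z : Fin n → Fin q → ℝ) (i : Fin n) : ℝ :=
  ∑ a, m a * z i a

/-- Average standardized utility of agent `i`'s bundle, given central ratings `ρ`. -/
noncomputable def avgStd {n q : ℕ} (K : ℝ) (m : Fin q → ℝ) (r : Fin n → Fin q → ℝ)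
    (ρ : Fin n → ℝ) (z : Fin n → Fin q → ℝ) (i : Fin n) : ℝ :=
  (∑ a, K ^ (r i a - ρ i) * m a * z i a) / mvalue m z i


/-!
Writing `S j = ∑ₐ K^(r j a - ρ j) m_a z j a` for the standardized utility of agent `j`, the central
rating lets us move the reference point of the exponent from `3` to `ρ j`, which turns the
normalized utility into `S j / ∑ₐ m_a` and the average standardized utility into `S j / μ j`.
The weighted egalitarian condition then says `S j = c w j` for one constant `c > 0`, so the average
standardized utility of `j` is `c` times the reciprocal of `μ j / w j`.
-/

open Finset

lemma sum_rpow_sub_mul_eq_rpow_sub_mul_sum {ι : Type*} (s : Finset ι) {K : ℝ} (hK : 0 < K)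
    (x : ι → ℝ) (c d : ℝ) (f : ι → ℝ) :
    ∑ a ∈ s, K ^ (x a - c) * f a = K ^ (d - c) * ∑ a ∈ s, K ^ (x a - d) * f a := by
  rw [mul_sum]
  refine sum_congr rfl fun a _ => ?_
  rw [← mul_assoc, ← Real.rpow_add hK]
  ring_nf

lemma sum_mul_pos_of_sum_pos {ι : Type*} {s : Finset ι} {c f : ι → ℝ}
    (hc : ∀ a ∈ s, 0 < c a) (hf : ∀ a ∈ s, 0 ≤ f a) (hsum : 0 < ∑ a ∈ s, f a) :
    0 < ∑ a ∈ s, c a * f a := by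
  obtain ⟨a, ha, hfa⟩ := exists_lt_of_sum_lt (f := fun _ => 0) (g := f) (by rwa [sum_const_zero])
  exact sum_pos' (fun b hb => mul_nonneg (hc b hb).le (hf b hb)) ⟨a, ha, mul_pos (hc a ha) hfa⟩

lemma div_lt_div_iff_div_lt_div_of_div_eq_div {Si Sh μi μh wi wh : ℝ} (hSi : 0 < Si)
    (hμi : 0 < μi) (hμh : 0 < μh) (hwi : 0 < wi) (hwh : 0 < wh) (hS : Si / wi = Sh / wh) :
    μh / wh < μi / wi ↔ Si / μi < Sh / μh := by
  set c := Si / wi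
  have hc : 0 < c := div_pos hSi hwi
  have hSi' : Si = c * wi := (div_mul_cancel₀ Si hwi.ne').symm
  have hSh' : Sh = c * wh := by rw [hS, div_mul_cancel₀ Sh hwh.ne']
  rw [hSi', hSh', mul_div_assoc, mul_div_assoc, mul_lt_mul_iff_right₀ hc,
    ← inv_div μi wi, ← inv_div μh wh, inv_lt_inv₀ (div_pos hμi hwi) (div_pos hμh hwh)]

noncomputable def stdUtil {n q : ℕ} (K : ℝ) (m : Fin q → ℝ) (r : Fin n → Fin q → ℝ)
    (ρ : Fin n → ℝ) (z : Fin n → Fin q → ℝ) (i : Fin n) : ℝ :=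
  ∑ a, K ^ (r i a - ρ i) * m a * z i a

section RatingModel

variable {n q : ℕ} {K : ℝ} {m : Fin q → ℝ} {r : Fin n → Fin q → ℝ} {ρ : Fin n → ℝ}
  {z : Fin n → Fin q → ℝ}

lemma avgStd_eq_stdUtil_div_mvalue (i : Fin n) :
    avgStd K m r ρ z i = stdUtil K m r ρ z i / mvalue m z i := rfl

lemma nutilR_eq_stdUtil_div_sum (hK : 0 < K) (i : Fin n)
    (hρ : ∑ a, K ^ (r i a - ρ i) * m a = ∑ a, m a) :
    nutilR K m r z i = stdUtil K m r ρ z i / ∑ a, m a := by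
  have hnum : ∑ a, K ^ (r i a - 3) * m a * z i a = K ^ (ρ i - 3) * stdUtil K m r ρ z i := by
    simp only [stdUtil, mul_assoc]
    exact sum_rpow_sub_mul_eq_rpow_sub_mul_sum _ hK _ _ _ _
  have hden : ∑ a, K ^ (r i a - 3) * m a = K ^ (ρ i - 3) * ∑ a, m a := by
    rw [← hρ]
    exact sum_rpow_sub_mul_eq_rpow_sub_mul_sum _ hK _ _ _ _
  rw [nutilR, hnum, hden, mul_div_mul_left _ _ (Real.rpow_pos_of_pos hK _).ne']

lemma stdUtil_pos (hK : 0 < K) (hm : ∀ a, 0 < m a) {i : Fin n} (hz : ∀ a, 0 ≤ z i a)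
    (hμ : 0 < mvalue m z i) : 0 < stdUtil K m r ρ z i := by
  simp only [stdUtil, mul_assoc]
  exact sum_mul_pos_of_sum_pos (fun a _ => Real.rpow_pos_of_pos hK _)
    (fun a _ => mul_nonneg (hm a).le (hz a)) hμ

end RatingModel

theorem market_value_vs_avg_standardized_utility {n q : ℕ}
    (K : ℝ) (hK : 1 < K) (m : Fin q → ℝ) (hm : ∀ a, 0 < m a)
    (r : Fin n → Fin q → ℝ) (ρ : Fin n → ℝ)
    (hρ : ∀ i, ∑ a, K ^ (r i a - ρ i) * m a = ∑ a, m a)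
    (z : Fin n → Fin q → ℝ) (hz : ∀ i a, 0 ≤ z i a ∧ z i a ≤ 1)
    (w : Fin n → ℝ) (hw : ∀ i, 0 < w i)
    (i h : Fin n)
    (hμi : 0 < mvalue m z i) (hμh : 0 < mvalue m z h)
    (hegal : nutilR K m r z i / w i = nutilR K m r z h / w h) :
    mvalue m z i / w i > mvalue m z h / w h ↔
      avgStd K m r ρ z i < avgStd K m r ρ z h := by
  have hK0 : 0 < K := one_pos.trans hK
  have hM : 0 < ∑ a, m a :=
    sum_pos (fun a _ => hm a) (nonempty_of_sum_ne_zero hμi.ne')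
  have hS : stdUtil K m r ρ z i / w i = stdUtil K m r ρ z h / w h := by
    rw [nutilR_eq_stdUtil_div_sum hK0 i (hρ i), nutilR_eq_stdUtil_div_sum hK0 h (hρ h),
      div_right_comm, div_right_comm (stdUtil K m r ρ z h)] at hegal
    exact (div_left_inj' hM.ne').1 hegal
  rw [gt_iff_lt, avgStd_eq_stdUtil_div_mvalue, avgStd_eq_stdUtil_div_mvalue]
  exact div_lt_div_iff_div_lt_div_of_div_eq_div
    (stdUtil_pos hK0 hm (fun a => (hz i a).1) hμi) hμi hμh (hw i) (hw h) hS
end
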